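/- arXiv:math/0409408 — 11 statements merged into one kernel-verified Lean document; each statement's English description precedes it below -/
import Mathlib

section
/- Let f : ℕ → ℕ be a regular sequence (i.e. f(0) = 0 and 0 ≤ f(n) - f(n-1) ≤ 1 for all n ≥ 1, with f(n) ≤ n). Define g : ℕ → ℕ by g(n) = mex { g(n-i) : 1 ≤ i ≤ f(n) }. Then for every n ≥ 1, the terms g(n), g(n-1), ..., g(n - f(n)) are pairwise distinct. -/
open Classical

noncomputable section

/-- The minimal excludant of a set of naturals. -/
def mex (S : Set ℕ) : ℕ := sInf {v | v ∉ S}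

/-- A rule sequence is regular if `f 0 = 0`, `f n ≤ n`, and `f` increases by 0 or 1. -/
def Regular (f : ℕ → ℕ) : Prop :=
  f 0 = 0 ∧ (∀ n, f n ≤ n) ∧ ∀ n, f n ≤ f (n + 1) ∧ f (n + 1) ≤ f n + 1

/-- `g` is the Grundy sequence for Maximum Nim with rule `f`:
`g n = mex { g (n - i) : 1 ≤ i ≤ f n }`. -/
def MaxNimGrundy (f g : ℕ → ℕ) : Prop :=
  ∀ n, g n = mex {v | ∃ i, 1 ≤ i ∧ i ≤ f n ∧ g (n - i) = v}

/-- `h` is the Grundy sequence for Minimum Nim with rule `f`: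
`h n = mex { h i : 0 ≤ i ≤ n - f n - 1 }`. -/
def MinNimGrundy (f h : ℕ → ℕ) : Prop :=
  ∀ n, h n = mex {v | ∃ i, i + f n + 1 ≤ n ∧ h i = v}

/-- Every natural number occurs infinitely often. -/
def Infinitive (g : ℕ → ℕ) : Prop := ∀ k, {n | g n = k}.Infinite

/-- The position of the first occurrence of `k` in `g`. -/
def firstOcc (g : ℕ → ℕ) (k : ℕ) : ℕ := sInf {n | g n = k}

/-- `n` is not the first occurrence of its value in `g`. -/
def NotFirst (g : ℕ → ℕ) (n : ℕ) : Prop := ∃ m < n, g m = g n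

/-- The subsequence of `g` obtained by deleting the first occurrence of each value. -/
def Lam (g : ℕ → ℕ) : ℕ → ℕ := fun m => g (Nat.nth (NotFirst g) m)

/-- Kimberling's fractal sequences: infinitive, first occurrences in increasing
order of value (F2), and deleting first occurrences leaves the sequence unchanged (F3). -/
def Fractal (g : ℕ → ℕ) : Prop :=
  Infinitive g ∧
  (∀ j k, j < k → firstOcc g j < firstOcc g k) ∧
  (∀ m, Lam g m = g m)

/-- The restriction `g|M`: the subsequence of terms of `g` lying in `M`. -/
def restrictSeq (g : ℕ → ℕ) (M : Set ℕ) : ℕ → ℕ :=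
  fun m => g (Nat.nth (fun n => g n ∈ M) m)

/-- An interspersion: an infinitive sequence such that for `i < j` the restriction
`g|{i,j}` is an initial block of `i`'s followed by strict alternation `j, i, j, i, ...`. -/
def Interspersion (g : ℕ → ℕ) : Prop :=
  Infinitive g ∧ ∀ i j, i < j → ∃ N,
    (∀ n < N, restrictSeq g {i, j} n = i) ∧
    ∀ n, restrictSeq g {i, j} (N + 2 * n) = j ∧
         restrictSeq g {i, j} (N + 2 * n + 1) = i

/-- `striangle g i j`: the number of occurrences of `i` strictly before the first
occurrence of `j`, not counting the occurrence `g 0 = 0` when `i = 0`. -/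
def striangle (g : ℕ → ℕ) (i j : ℕ) : ℕ :=
  Set.ncard {n | g n = i ∧ n < firstOcc g j ∧ (i = 0 → n ≠ 0)}

/-- A subadditive triangle: `s i j + s j k - 1 ≤ s i k ≤ s i j + s j k` for `i < j < k`. -/
def SubadditiveTriangle (s : ℕ → ℕ → ℕ) : Prop :=
  ∀ i j k, i < j → j < k →
    s i j + s j k ≤ s i k + 1 ∧ s i k ≤ s i j + s j k


lemma mex_not_mem_of_finite (S : Set ℕ) (hS : S.Finite) : mex S ∉ S := by
  have h : {v | v ∉ S}.Nonempty := hS.infinite_compl.nonempty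
  exact Nat.sInf_mem h

lemma grundy_ne (f g : ℕ → ℕ) (hg : MaxNimGrundy f g) :
    ∀ m i, 1 ≤ i → i ≤ f m → g m ≠ g (m - i) := by
  intro m i h1 h2
  have hfin : ({v | ∃ i, 1 ≤ i ∧ i ≤ f m ∧ g (m - i) = v} : Set ℕ).Finite := by
    have : ({v | ∃ i, 1 ≤ i ∧ i ≤ f m ∧ g (m - i) = v} : Set ℕ)
        ⊆ (fun i => g (m - i)) '' (Set.Icc 1 (f m)) := by
      rintro v ⟨i, hi1, hi2, hv⟩
      exact ⟨i, ⟨hi1, hi2⟩, hv⟩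
    exact Set.Finite.subset ((Set.finite_Icc 1 (f m)).image _) this
  have hnm := mex_not_mem_of_finite _ hfin
  rw [← hg m] at hnm
  intro heq
  exact hnm ⟨i, h1, h2, heq.symm⟩

lemma regular_sub (f : ℕ → ℕ) (hf : Regular f) : ∀ n k, f n ≤ f (n - k) + k := by
  obtain ⟨h0, hle, hstep⟩ := hf
  intro n k
  induction k with
  | zero => simp
  | succ k ih =>
    rcases Nat.eq_zero_or_pos (n - k) with h | h
    · have : f n ≤ n := hle n
      omega
    · have h2 : n - (k + 1) + 1 = n - k := by omega
      have := (hstep (n - (k + 1))).2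
      rw [h2] at this
      omega

/-- for a regular rule `f`, the terms `g n, g (n-1), ..., g (n - f n)`
of the Maximum Nim Grundy sequence are pairwise distinct (for `n ≥ 1`). -/
theorem maxNim_terms_distinct (f g : ℕ → ℕ) (hf : Regular f) (hg : MaxNimGrundy f g) :
    ∀ n, 1 ≤ n → ∀ i j, i ≤ f n → j ≤ f n → i ≠ j → g (n - i) ≠ g (n - j) := by
  have key : ∀ n i j, i < j → j ≤ f n → g (n - i) ≠ g (n - j) := by
    intro n i j hij hj
    have hfn : f n ≤ n := hf.2.1 n
    have hin : i < n := lt_of_lt_of_le hij (le_trans hj hfn)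
    have hfm : f n ≤ f (n - i) + i := regular_sub f hf n i
    have h1 : 1 ≤ j - i := by omega
    have h2 : j - i ≤ f (n - i) := by omega
    have := grundy_ne f g hg (n - i) (j - i) h1 h2
    have heq : n - i - (j - i) = n - j := by omega
    rwa [heq] at this
  intro n _ i j hi hj hne
  rcases Nat.lt_or_ge i j with h | h
  · exact key n i j h hj
  · exact fun e => key n j i (by omega) hi e.symm
end
end

section
/- Let f : ℕ → ℕ be a regular sequence and let g be the Grundy sequence for Maximum Nim with rule f, i.e. g(n) = mex { g(n-i) : 1 ≤ i ≤ f(n) }. Then for all n ≥ 1: if f(n) > f(n-1) then g(n) = f(n), and if f(n) = f(n-1) then g(n) = g(n - f(n) - 1). -/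
open Classical

noncomputable section

lemma mex_eq_of (S : Set ℕ) (k : ℕ) (h1 : k ∉ S) (h2 : ∀ v, v < k → v ∈ S) :
    mex S = k := by
  have hk : k ∈ {v | v ∉ S} := h1
  have h3 : sInf {v | v ∉ S} ≤ k := Nat.sInf_le hk
  have h4 : sInf {v | v ∉ S} ∈ {v | v ∉ S} := Nat.sInf_mem ⟨k, hk⟩
  rcases lt_or_eq_of_le h3 with h | h
  · exact absurd (h2 _ h) h4
  · exact h

lemma window (f g : ℕ → ℕ) (hf : Regular f) (hg : MaxNimGrundy f g) :
    ∀ n, Finset.image (fun j => g (n - j)) (Finset.range (f n + 1)) = Finset.range (f n + 1) := by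
  obtain ⟨hf0, hfle, hfstep⟩ := hf
  intro n
  induction n with
  | zero =>
    have hg0 : g 0 = 0 := by
      rw [hg 0]
      apply mex_eq_of
      · rintro ⟨i, hi1, hi2, -⟩; omega
      · omega
    simp [hf0, hg0]
  | succ n ih =>
    rcases Nat.lt_or_ge (f n) (f (n + 1)) with hcase | hcase
    · -- jump case: f (n+1) = f n + 1
      have hm : f (n + 1) = f n + 1 := by have := hfstep n; omega
      have hval : g (n + 1) = f n + 1 := by
        rw [hg (n + 1)]
        apply mex_eq_of
        · rintro ⟨i, hi1, hi2, hiv⟩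
          have : g (n - (i - 1)) ∈ Finset.range (f n + 1) := by
            rw [← ih]
            exact Finset.mem_image_of_mem _ (Finset.mem_range.2 (by omega))
          have hEq : n + 1 - i = n - (i - 1) := by omega
          rw [hEq] at hiv
          rw [Finset.mem_range, hiv] at this
          omega
        · intro v hv
          have : v ∈ Finset.range (f n + 1) := Finset.mem_range.2 (by omega)
          rw [← ih, Finset.mem_image] at this
          obtain ⟨j, hj, hjv⟩ := this
          rw [Finset.mem_range] at hj
          refine ⟨j + 1, by omega, by omega, ?_⟩
          have hEq : n + 1 - (j + 1) = n - j := by omega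
          rw [hEq, hjv]
      rw [hm]
      ext v
      simp only [Finset.mem_image, Finset.mem_range]
      constructor
      · rintro ⟨j, hj, rfl⟩
        rcases Nat.eq_zero_or_pos j with rfl | hjpos
        · simp [hval]
        · have : g (n + 1 - j) ∈ Finset.range (f n + 1) := by
            rw [← ih]
            refine Finset.mem_image.2 ⟨j - 1, Finset.mem_range.2 (by omega), ?_⟩
            congr 1; omega
          rw [Finset.mem_range] at this; omega
      · intro hv
        rcases Nat.lt_or_ge v (f n + 1) with hv' | hv'
        · have : v ∈ Finset.range (f n + 1) := Finset.mem_range.2 hv'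
          rw [← ih, Finset.mem_image] at this
          obtain ⟨j, hj, hjv⟩ := this
          rw [Finset.mem_range] at hj
          refine ⟨j + 1, by omega, ?_⟩
          rw [show n + 1 - (j + 1) = n - j by omega, hjv]
        · have : v = f n + 1 := by omega
          exact ⟨0, by omega, by simpa [this] using hval⟩
    · -- flat case: f (n+1) = f n
      have hm : f (n + 1) = f n := by have := hfstep n; omega
      have hinj : Set.InjOn (fun j => g (n - j)) (Finset.range (f n + 1)) := by
        apply Finset.injOn_of_card_image_eq
        rw [ih]
      have hval : g (n + 1) = g (n - f n) := by
        rw [hg (n + 1), hm]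
        apply mex_eq_of
        · rintro ⟨i, hi1, hi2, hiv⟩
          have h1 : (i - 1 : ℕ) ∈ (Finset.range (f n + 1) : Set ℕ) := by
            simp only [Finset.coe_range, Set.mem_Iio]; omega
          have h2 : (f n : ℕ) ∈ (Finset.range (f n + 1) : Set ℕ) := by
            simp only [Finset.coe_range, Set.mem_Iio]; omega
          have hEq : n + 1 - i = n - (i - 1) := by omega
          rw [hEq] at hiv
          have := hinj h1 h2 (by simpa using hiv)
          omega
        · intro v hv
          have hvlt : g (n - f n) ∈ Finset.range (f n + 1) := by
            rw [← ih]
            exact Finset.mem_image_of_mem _ (Finset.mem_range.2 (by omega))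
          rw [Finset.mem_range] at hvlt
          have : v ∈ Finset.range (f n + 1) := Finset.mem_range.2 (by omega)
          rw [← ih, Finset.mem_image] at this
          obtain ⟨j, hj, hjv⟩ := this
          rw [Finset.mem_range] at hj
          have hjne : j ≠ f n := by rintro rfl; omega
          refine ⟨j + 1, by omega, by omega, ?_⟩
          rw [show n + 1 - (j + 1) = n - j by omega, hjv]
      rw [hm]
      ext v
      simp only [Finset.mem_image, Finset.mem_range]
      constructor
      · rintro ⟨j, hj, rfl⟩
        rcases Nat.eq_zero_or_pos j with rfl | hjpos
        · have : g (n - f n) ∈ Finset.range (f n + 1) := by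
            rw [← ih]
            exact Finset.mem_image_of_mem _ (Finset.mem_range.2 (by omega))
          rw [Finset.mem_range] at this
          simpa [hval] using this
        · have : g (n + 1 - j) ∈ Finset.range (f n + 1) := by
            rw [← ih]
            refine Finset.mem_image.2 ⟨j - 1, Finset.mem_range.2 (by omega), ?_⟩
            congr 1; omega
          rw [Finset.mem_range] at this; omega
      · intro hv
        have : v ∈ Finset.range (f n + 1) := Finset.mem_range.2 hv
        rw [← ih, Finset.mem_image] at this
        obtain ⟨j, hj, hjv⟩ := this
        rw [Finset.mem_range] at hj
        rcases eq_or_ne j (f n) with rfl | hjne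
        · exact ⟨0, by omega, by simp [hval, hjv]⟩
        · refine ⟨j + 1, by omega, ?_⟩
          rw [show n + 1 - (j + 1) = n - j by omega, hjv]

/-- the fractal recurrence for the Maximum Nim Grundy sequence. -/
theorem maxNim_fractal_recurrence (f g : ℕ → ℕ) (hf : Regular f) (hg : MaxNimGrundy f g) :
    ∀ n, 1 ≤ n →
      (f (n - 1) < f n → g n = f n) ∧
      (f n = f (n - 1) → g n = g (n - f n - 1)) := by
  obtain ⟨hf0, hfle, hfstep⟩ := hf
  have ih := window f g ⟨hf0, hfle, hfstep⟩ hg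
  intro n' hn
  obtain ⟨n, rfl⟩ : ∃ m, n' = m + 1 := ⟨n' - 1, by omega⟩
  simp only [Nat.add_sub_cancel]
  constructor
  · intro hcase
    have hm : f (n + 1) = f n + 1 := by have := hfstep n; omega
    rw [hg (n + 1), hm]
    apply mex_eq_of
    · rintro ⟨i, hi1, hi2, hiv⟩
      have : g (n - (i - 1)) ∈ Finset.range (f n + 1) := by
        rw [← ih n]
        exact Finset.mem_image_of_mem _ (Finset.mem_range.2 (by omega))
      rw [show n + 1 - i = n - (i - 1) by omega] at hiv
      rw [Finset.mem_range, hiv] at this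
      omega
    · intro v hv
      have : v ∈ Finset.range (f n + 1) := Finset.mem_range.2 (by omega)
      rw [← ih n, Finset.mem_image] at this
      obtain ⟨j, hj, hjv⟩ := this
      rw [Finset.mem_range] at hj
      refine ⟨j + 1, by omega, by omega, ?_⟩
      rw [show n + 1 - (j + 1) = n - j by omega, hjv]
  · intro hm
    have hinj : Set.InjOn (fun j => g (n - j)) (Finset.range (f n + 1)) := by
      apply Finset.injOn_of_card_image_eq
      rw [ih n]
    have hEq2 : n + 1 - f (n + 1) - 1 = n - f n := by have := hfle n; omega
    rw [hEq2, hg (n + 1), hm]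
    apply mex_eq_of
    · rintro ⟨i, hi1, hi2, hiv⟩
      have h1 : (i - 1 : ℕ) ∈ (Finset.range (f n + 1) : Set ℕ) := by
        simp only [Finset.coe_range, Set.mem_Iio]; omega
      have h2 : (f n : ℕ) ∈ (Finset.range (f n + 1) : Set ℕ) := by
        simp only [Finset.coe_range, Set.mem_Iio]; omega
      rw [show n + 1 - i = n - (i - 1) by omega] at hiv
      have := hinj h1 h2 (by simpa using hiv)
      omega
    · intro v hv
      have hvlt : g (n - f n) ∈ Finset.range (f n + 1) := by
        rw [← ih n]
        exact Finset.mem_image_of_mem _ (Finset.mem_range.2 (by omega))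
      rw [Finset.mem_range] at hvlt
      have : v ∈ Finset.range (f n + 1) := Finset.mem_range.2 (by omega)
      rw [← ih n, Finset.mem_image] at this
      obtain ⟨j, hj, hjv⟩ := this
      rw [Finset.mem_range] at hj
      have hjne : j ≠ f n := by rintro rfl; omega
      refine ⟨j + 1, by omega, by omega, ?_⟩
      rw [show n + 1 - (j + 1) = n - j by omega, hjv]
end
end

section
/- Let f : ℕ → ℕ be a regular sequence with f(n) > f(n-1) for infinitely many n, and let g be the Grundy sequence for Maximum Nim with rule f. If f(n) > f(n-1), then g(m) < f(n) for all m < n. -/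
open Classical

noncomputable section

/-- if `f n > f (n-1)`, then `g m < f n` for all `m < n`. -/
theorem maxNim_lt_of_jump (f g : ℕ → ℕ) (hf : Regular f)
    (hjump : {n | 0 < n ∧ f (n - 1) < f n}.Infinite)
    (hg : MaxNimGrundy f g) :
    ∀ n, 1 ≤ n → f (n - 1) < f n → ∀ m, m < n → g m < f n := by
  have hmono : Monotone f := monotone_nat_of_le_succ fun n => (hf.2.2 n).1
  have hle : ∀ m, g m ≤ f m := by
    intro m
    set S : Set ℕ := {v | ∃ i, 1 ≤ i ∧ i ≤ f m ∧ g (m - i) = v} with hS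
    set T : Finset ℕ := (Finset.Icc 1 (f m)).image (fun i => g (m - i)) with hT
    have hST : S = ↑T := by
      ext v
      simp [hS, hT, Finset.mem_image, Finset.mem_Icc]
      tauto
    have hcard : T.card ≤ f m := by
      calc T.card ≤ (Finset.Icc 1 (f m)).card := Finset.card_image_le
        _ = f m := by simp
    have : ¬ (Finset.range (f m + 1) ⊆ T) := by
      intro hsub
      have := Finset.card_le_card hsub
      simp at this
      omega
    obtain ⟨v, hv, hvT⟩ := Finset.not_subset.mp this
    have hvle : v ≤ f m := by simpa [Nat.lt_succ_iff] using Finset.mem_range.mp hv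
    have : g m ≤ v := by
      rw [hg m, mex]
      refine Nat.sInf_le ?_
      show v ∉ S
      rw [hST]
      exact_mod_cast hvT
    omega
  intro n hn hjmp m hm
  have h1 : g m ≤ f m := hle m
  have h2 : f m ≤ f (n - 1) := hmono (by omega)
  omega
end
end

section
/- Let f be a regular sequence and g the Grundy sequence for Maximum Nim with rule f, and suppose every natural number occurs infinitely often in g. Let Λ(g) be the subsequence of g obtained by deleting, for each natural number i, the first term of g equal to i. Then Λ(g) = g, i.e. for all m, Λ(g)(m) = g(m). -/
open Classical

noncomputable section

-- mex basics
lemma mem_of_lt_mex {S : Set ℕ} {v : ℕ} (hv : v < mex S) : v ∈ S := by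
  by_contra h
  have : mex S ≤ v := Nat.sInf_le h
  omega

lemma mex_eq {S : Set ℕ} {k : ℕ} (h1 : k ∉ S) (h2 : ∀ v < k, v ∈ S) : mex S = k := by
  have hmem : mex S ∉ S := Nat.sInf_mem (⟨k, h1⟩ : {v | v ∉ S}.Nonempty)
  have hle : mex S ≤ k := Nat.sInf_le h1
  rcases lt_or_eq_of_le hle with h | h
  · exact absurd (h2 _ h) hmem
  · exact h

section main
variable {f g : ℕ → ℕ} (hf : Regular f) (hg : MaxNimGrundy f g)
include hf hg
set_option linter.unusedSectionVars false


-- f basics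
lemma f_mono (a b : ℕ) (h : a ≤ b) : f a ≤ f b := by
  have := hf.2.2
  exact monotone_nat_of_le_succ (fun n => (this n).1) h

lemma f_step (a b : ℕ) (h : a ≤ b) : f b ≤ f a + (b - a) := by
  induction b with
  | zero =>
    have : a = 0 := by omega
    subst this; omega
  | succ n ih =>
    rcases Nat.eq_or_lt_of_le h with h' | h'
    · subst h'; omega
    · have h2 := (hf.2.2 n).2
      have := ih (by omega)
      omega

-- window
def W (f g : ℕ → ℕ) (n : ℕ) : Finset ℕ := (Finset.Ico (n - f n) n).image g

lemma window_eq (n : ℕ) :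
    {v | ∃ i, 1 ≤ i ∧ i ≤ f n ∧ g (n - i) = v} = ↑(W f g n) := by
  have hfn : f n ≤ n := hf.2.1 n
  ext v
  simp only [Set.mem_setOf_eq, W, Finset.coe_image, Set.mem_image, Finset.coe_Ico,
    Set.mem_Ico]
  constructor
  · rintro ⟨i, h1, h2, h3⟩
    exact ⟨n - i, ⟨by omega, by omega⟩, h3⟩
  · rintro ⟨p, ⟨h1, h2⟩, h3⟩
    refine ⟨n - p, by omega, by omega, ?_⟩
    rw [show n - (n - p) = p by omega]
    exact h3

lemma g_eq_mexW (n : ℕ) : g n = mex ↑(W f g n) := by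
  rw [hg n, window_eq hf hg]

lemma g_notMem_W (n : ℕ) : g n ∉ (W f g n : Set ℕ) := by
  rw [g_eq_mexW hf hg]
  exact Nat.sInf_mem ((W f g n).finite_toSet.infinite_compl.nonempty)

lemma mem_W_of_lt (n v : ℕ) (h : v < g n) : v ∈ (W f g n : Set ℕ) := by
  rw [g_eq_mexW hf hg] at h
  exact mem_of_lt_mex h

-- distinctness on window
lemma window_injOn (n : ℕ) : Set.InjOn g (Set.Ico (n - f n) n) := by
  have key : ∀ a b, n - f n ≤ a → a < b → b < n → g a ≠ g b := by
    intro a b ha hab hb hgab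
    have hfb : f b ≤ b := hf.2.1 b
    have h1 : f n ≤ f b + (n - b) := f_step hf hg b n (by omega)
    have haW : g a ∈ (W f g b : Set ℕ) := by
      simp only [W, Finset.coe_image, Set.mem_image, Finset.coe_Ico, Set.mem_Ico]
      exact ⟨a, ⟨by omega, hab⟩, rfl⟩
    rw [hgab] at haW
    exact g_notMem_W hf hg b haW
  intro a ha b hb hab
  simp only [Set.mem_Ico] at ha hb
  rcases lt_trichotomy a b with h | h | h
  · exact absurd hab (key a b ha.1 h hb.2)
  · exact h
  · exact absurd hab.symm (key b a hb.1 h ha.2)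

lemma g_le_f (n : ℕ) : g n ≤ f n := by
  have hfn : f n ≤ n := hf.2.1 n
  have hsub : Finset.Iio (g n) ⊆ W f g n := by
    intro v hv
    simp only [Finset.mem_Iio] at hv
    exact mem_W_of_lt hf hg n v hv
  have h1 := Finset.card_le_card hsub
  have h2 := Finset.card_image_le (s := Finset.Ico (n - f n) n) (f := g)
  simp only [W] at h1 h2
  rw [Nat.card_Iio] at h1
  rw [Nat.card_Ico] at h2
  omega

-- first occurrence of value k in f
lemma f_unbounded (hinf : Infinitive g) (k : ℕ) : ∃ n, k ≤ f n := by
  obtain ⟨n, hn⟩ := (hinf k).nonempty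
  exact ⟨n, by rw [← hn]; exact g_le_f hf hg n⟩

end main

/-- least index where `f` reaches `k` -/
def nk (f : ℕ → ℕ) (k : ℕ) : ℕ := sInf {p | k ≤ f p}

section main2
variable {f g : ℕ → ℕ} (hf : Regular f) (hg : MaxNimGrundy f g) (hinf : Infinitive g)
include hf hg hinf
set_option linter.unusedSectionVars false

lemma nk_le {k n : ℕ} (h : k ≤ f n) : nk f k ≤ n := Nat.sInf_le h

lemma nk_spec (k : ℕ) : f (nk f k) = k ∧ ∀ p < nk f k, f p < k := by
  have h2 : ∀ p < nk f k, f p < k := by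
    intro p hp
    have := Nat.notMem_of_lt_sInf (s := {p | k ≤ f p}) hp
    simp only [Set.mem_setOf_eq] at this
    omega
  refine ⟨?_, h2⟩
  have hne : {p | k ≤ f p}.Nonempty := by
    obtain ⟨n, hn⟩ := f_unbounded hf hg hinf k
    exact ⟨n, hn⟩
  have hmem : k ≤ f (nk f k) := Nat.sInf_mem hne
  rcases Nat.eq_zero_or_pos k with rfl | hk
  · have : nk f 0 = 0 := Nat.le_zero.mp (nk_le hf hg hinf (by omega))
    rw [this, hf.1]
  · have hn1 : 1 ≤ nk f k := by
      rcases Nat.eq_zero_or_pos (nk f k) with h0 | h; · rw [h0, hf.1] at hmem; omega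
      · exact h
    have h3 : f (nk f k - 1) < k := h2 _ (by omega)
    have h4 := (hf.2.2 (nk f k - 1)).2
    rw [show nk f k - 1 + 1 = nk f k by omega] at h4
    omega

lemma g_zero : g 0 = 0 := by
  rw [hg 0]
  refine mex_eq ?_ (by omega)
  rintro ⟨i, h1, h2, -⟩
  rw [hf.1] at h2; omega

lemma g_nk (k : ℕ) : g (nk f k) = k := by
  rcases Nat.eq_zero_or_pos k with rfl | hk
  · have : nk f 0 = 0 := Nat.le_zero.mp (nk_le hf hg hinf (by omega))
    rw [this]; exact g_zero hf hg hinf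
  · set n := nk f k with hn
    have hfn : f n = k := (nk_spec hf hg hinf k).1
    have hlt : ∀ p < n, f p < k := (nk_spec hf hg hinf k).2
    have hkn : k ≤ n := by rw [← hfn]; exact hf.2.1 n
    have hWsub : W f g n ⊆ Finset.Iio k := by
      intro v hv
      simp only [W, Finset.mem_image, Finset.mem_Ico] at hv
      obtain ⟨p, ⟨hp1, hp2⟩, rfl⟩ := hv
      simp only [Finset.mem_Iio]
      exact lt_of_le_of_lt (g_le_f hf hg p) (hlt p hp2)
    have hinj : Set.InjOn g (Set.Ico (n - f n) n) := window_injOn hf hg n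
    have hcard : (W f g n).card = k := by
      rw [W, Finset.card_image_of_injOn (by rwa [Finset.coe_Ico]), Nat.card_Ico]
      omega
    have hWeq : W f g n = Finset.Iio k :=
      Finset.eq_of_subset_of_card_le hWsub (by rw [hcard, Nat.card_Iio])
    rw [g_eq_mexW hf hg n, hWeq]
    refine mex_eq (by simp) (by intro v hv; simpa using hv)

lemma g_lt_of_lt_nk {p k : ℕ} (h : p < nk f k) : g p < k :=
  lt_of_le_of_lt (g_le_f hf hg p) ((nk_spec hf hg hinf k).2 p h)

lemma jump_first {p : ℕ} (hp : 1 ≤ p) (hj : f p = f (p - 1) + 1) :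
    g p = f p ∧ ∀ q < p, g q < f p := by
  have hpnk : p = nk f (f p) := by
    have h1 : nk f (f p) ≤ p := nk_le hf hg hinf le_rfl
    rcases Nat.eq_or_lt_of_le h1 with h | h; · omega
    · exfalso
      have h2 := (nk_spec hf hg hinf (f p)).1
      have h3 : f (nk f (f p)) ≤ f (p - 1) := f_mono hf hg _ _ (by omega)
      omega
  constructor
  · have h := g_nk hf hg hinf (f p)
    rw [← hpnk] at h
    exact h
  · intro q hq
    exact g_lt_of_lt_nk hf hg hinf (k := f p) (by rw [← hpnk]; exact hq)

lemma notFirst_iff (n : ℕ) : NotFirst g n ↔ 1 ≤ n ∧ f n = f (n - 1) := by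
  constructor
  · rintro ⟨m, hm, hgm⟩
    have hn : 1 ≤ n := by omega
    refine ⟨hn, ?_⟩
    by_contra hne
    have hd := hf.2.2 (n - 1)
    rw [show n - 1 + 1 = n by omega] at hd
    have hj : f n = f (n - 1) + 1 := by omega
    obtain ⟨h1, h2⟩ := jump_first hf hg hinf hn hj
    have := h2 m hm
    omega
  · rintro ⟨hn, hfeq⟩
    have hk : g n ≤ f (n - 1) := by
      have := g_le_f hf hg n; omega
    refine ⟨nk f (g n), ?_, g_nk hf hg hinf (g n)⟩
    have := nk_le hf hg hinf (n := n - 1) hk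
    omega

lemma notFirst_infinite : (setOf (NotFirst g)).Infinite := by
  apply Set.Infinite.mono _ ((hinf 0).diff (Set.finite_singleton 0))
  rintro p ⟨hp0, hp1⟩
  simp only [Set.mem_singleton_iff] at hp1
  exact ⟨0, by omega, by rw [g_zero hf hg hinf, hp0]⟩

lemma count_notFirst (n : ℕ) : Nat.count (NotFirst g) (n + 1) = n - f n := by
  induction n with
  | zero =>
    rw [Nat.count_succ, Nat.count_zero, if_neg]
    · omega
    · rintro ⟨m, hm, -⟩; omega
  | succ n ih =>
    rw [Nat.count_succ, ih]
    have h1 := hf.2.2 n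
    have h2 := hf.2.1 n
    by_cases h : NotFirst g (n + 1)
    · rw [if_pos h]
      have := (notFirst_iff hf hg hinf (n + 1)).mp h
      simp only [Nat.add_sub_cancel] at this
      omega
    · rw [if_neg h]
      have : ¬(1 ≤ n + 1 ∧ f (n + 1) = f n) := by
        intro hc
        exact h ((notFirst_iff hf hg hinf (n + 1)).mpr ⟨hc.1, by simpa using hc.2⟩)
      omega

lemma nth_add (m : ℕ) :
    Nat.nth (NotFirst g) m = m + f (Nat.nth (NotFirst g) m) + 1 := by
  set n := Nat.nth (NotFirst g) m with hn
  have hNF : NotFirst g n := Nat.nth_mem_of_infinite (notFirst_infinite hf hg hinf) m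
  have hc : Nat.count (NotFirst g) n = m :=
    Nat.count_nth_of_infinite (notFirst_infinite hf hg hinf) m
  obtain ⟨h1, h2⟩ := (notFirst_iff hf hg hinf n).mp hNF
  rw [show n = (n - 1) + 1 by omega, count_notFirst hf hg hinf] at hc
  have h3 := hf.2.1 (n - 1)
  omega

lemma lam_grundy : MaxNimGrundy f (Lam g) := by
  intro m
  have hinfP := notFirst_infinite hf hg hinf
  set n := Nat.nth (NotFirst g) m with hn
  have hNF : NotFirst g n := Nat.nth_mem_of_infinite hinfP m
  have hc : Nat.count (NotFirst g) n = m := Nat.count_nth_of_infinite hinfP m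
  have heq : n = m + f n + 1 := nth_add hf hg hinf m
  have hfn1 : f n = f (n - 1) := ((notFirst_iff hf hg hinf n).mp hNF).2
  have hfm : f m ≤ m := hf.2.1 m
  have hcm : Nat.count (NotFirst g) (m + 1) = m - f m := count_notFirst hf hg hinf m
  show g n = _
  refine (mex_eq ?_ ?_).symm
  · -- g n not in the Λ-window
    rintro ⟨i, hi1, hi2, hv⟩
    set q := Nat.nth (NotFirst g) (m - i) with hq
    have hPq : NotFirst g q := Nat.nth_mem_of_infinite hinfP _
    have hcq : Nat.count (NotFirst g) q = m - i := Nat.count_nth_of_infinite hinfP _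
    have hq1 : m + 1 ≤ q := by
      by_contra hcon
      have h1 : Nat.count (NotFirst g) (q + 1) ≤ Nat.count (NotFirst g) (m + 1) :=
        Nat.count_monotone _ (by omega)
      rw [Nat.count_succ, if_pos hPq, hcq, hcm] at h1
      omega
    have hq2 : q < n := by
      by_contra hcon
      have h1 : Nat.count (NotFirst g) n ≤ Nat.count (NotFirst g) q :=
        Nat.count_monotone _ (by omega)
      omega
    have hmem : g q ∈ (W f g n : Set ℕ) := by
      simp only [W, Finset.coe_image, Set.mem_image, Finset.coe_Ico, Set.mem_Ico]
      exact ⟨q, ⟨by omega, hq2⟩, rfl⟩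
    rw [show Lam g (m - i) = g q from rfl] at hv
    rw [hv] at hmem
    exact g_notMem_W hf hg n hmem
  · -- every v < g n is in the Λ-window
    intro v hv
    have hvW : v ∈ (W f g n : Set ℕ) := mem_W_of_lt hf hg n v hv
    simp only [W, Finset.coe_image, Set.mem_image, Finset.coe_Ico, Set.mem_Ico] at hvW
    obtain ⟨p, ⟨hp1, hp2⟩, hgp⟩ := hvW
    have hp1' : m + 1 ≤ p := by omega
    have hPp : NotFirst g p := by
      by_contra hcon
      have hnot := (notFirst_iff hf hg hinf p).not.mp hcon
      have hd := hf.2.2 (p - 1)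
      rw [show p - 1 + 1 = p by omega] at hd
      have hj : f p = f (p - 1) + 1 := by omega
      obtain ⟨hgpf, hqlt⟩ := jump_first hf hg hinf (by omega) hj
      -- v = f p < g n; then nk f (g n) lies in the window and has value g n
      have hvfp : v = f p := by omega
      set r := nk f (g n) with hr
      have hrlt : r ≤ n - 1 := nk_le hf hg hinf (n := n - 1) (by
        have := g_le_f hf hg n; omega)
      have hrge : p ≤ r := by
        by_contra hcon2
        have := hqlt r (by omega)
        rw [g_nk hf hg hinf (g n)] at this
        omega
      have hmem : g r ∈ (W f g n : Set ℕ) := by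
        simp only [W, Finset.coe_image, Set.mem_image, Finset.coe_Ico, Set.mem_Ico]
        exact ⟨r, ⟨by omega, by omega⟩, rfl⟩
      rw [g_nk hf hg hinf (g n)] at hmem
      exact g_notMem_W hf hg n hmem
    set j := Nat.count (NotFirst g) p with hj
    have hnthj : Nat.nth (NotFirst g) j = p := Nat.nth_count hPp
    have hjge : m - f m ≤ j := by
      have := Nat.count_monotone (NotFirst g) hp1'
      omega
    have hjle : j + 1 ≤ m := by
      have h1 : Nat.count (NotFirst g) (p + 1) ≤ Nat.count (NotFirst g) n :=
        Nat.count_monotone _ (by omega)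
      rw [Nat.count_succ, if_pos hPp] at h1
      omega
    refine ⟨m - j, by omega, by omega, ?_⟩
    rw [show m - (m - j) = j by omega, show Lam g j = g (Nat.nth (NotFirst g) j) from rfl,
      hnthj, hgp]

end main2

lemma grundy_unique {f g₁ g₂ : ℕ → ℕ} (hf : Regular f) (h1 : MaxNimGrundy f g₁)
    (h2 : MaxNimGrundy f g₂) : ∀ n, g₁ n = g₂ n := by
  intro n
  induction n using Nat.strong_induction_on with
  | _ n ih =>
    rw [h1 n, h2 n]
    congr 1
    ext v
    have hfn := hf.2.1 n
    constructor
    · rintro ⟨i, hi1, hi2, rfl⟩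
      exact ⟨i, hi1, hi2, (ih (n - i) (by omega)).symm⟩
    · rintro ⟨i, hi1, hi2, rfl⟩
      exact ⟨i, hi1, hi2, ih (n - i) (by omega)⟩

/-- for a regular rule `f`, if every natural number occurs infinitely
often in the Maximum Nim Grundy sequence `g`, then `Λ(g) = g`. -/
theorem maxNim_selfSimilar (f g : ℕ → ℕ) (hf : Regular f) (hg : MaxNimGrundy f g)
    (hinf : Infinitive g) :
    ∀ m, Lam g m = g m :=
  fun m => grundy_unique hf (lam_grundy hf hg hinf) hg m
end
end

section
/- Let g : ℕ → ℕ be a fractal sequence. Define f(n) = max { g(m) : m ≤ n }. Then f is regular, and g is the Grundy sequence for Maximum Nim with rule f: g(n) = mex { g(n-i) : 1 ≤ i ≤ f(n) } for all n. -/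
open Classical

noncomputable section

namespace FractalAux

variable {g : ℕ → ℕ}

lemma g_firstOcc (hg : Infinitive g) (k : ℕ) : g (firstOcc g k) = k :=
  Nat.sInf_mem (hg k).nonempty

lemma firstOcc_le (m : ℕ) : firstOcc g (g m) ≤ m := Nat.sInf_le rfl

lemma not_notFirst_firstOcc (hg : Infinitive g) (k : ℕ) : ¬ NotFirst g (firstOcc g k) := by
  rintro ⟨m, hm, hgm⟩
  rw [g_firstOcc hg] at hgm
  exact absurd (Nat.sInf_le (show m ∈ {n | g n = k} from hgm)) (not_le.2 hm)

lemma nf_infinite (hg : Fractal g) : (setOf (NotFirst g)).Infinite := by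
  refine Set.Infinite.mono ?_ (((hg.1 0).diff (Set.finite_singleton (firstOcc g 0))))
  rintro n ⟨hn0, hne⟩
  have h1 : firstOcc g 0 ≤ n := by
    have := firstOcc_le (g := g) n
    rwa [hn0] at this
  have h2 : firstOcc g 0 < n := by
    have hne' : n ≠ firstOcc g 0 := by simpa using hne
    omega
  exact ⟨firstOcc g 0, h2, by rw [g_firstOcc hg.1, hn0]⟩

lemma g_nth_nf (hg : Fractal g) (m : ℕ) : g (Nat.nth (NotFirst g) m) = g m := hg.2.2 m

lemma nth_nf_pos (hg : Fractal g) (m : ℕ) : m < Nat.nth (NotFirst g) m := by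
  classical
  have key : Nat.count (NotFirst g) (m + 1) ≤ m := by
    induction m with
    | zero =>
      have h0 : ¬ NotFirst g 0 := by rintro ⟨m, hm, _⟩; exact Nat.not_lt_zero m hm
      simp [Nat.count_succ, h0]
    | succ k ih =>
      rw [Nat.count_succ]
      split <;> omega
  have := (Nat.count_le_iff_le_nth (nf_infinite hg)).1 key
  omega

/-- `Nat.nth (NotFirst g)` sends the `t`-th occurrence of `k` to the `(t+1)`-th. -/
lemma nth_nf_occ (hg : Fractal g) (k t : ℕ) :
    Nat.nth (NotFirst g) (Nat.nth (fun n => g n = k) t) = Nat.nth (fun n => g n = k) (t + 1) := by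
  classical
  have hP : (setOf (fun n => g n = k)).Infinite := hg.1 k
  induction t using Nat.strong_induction_on with
  | _ t IH =>
    set P := fun n => g n = k with hPdef
    set b := Nat.nth P (t + 1) with hbdef
    have hb : g b = k := Nat.nth_mem_of_infinite hP (t + 1)
    have hNFb : NotFirst g b := by
      refine ⟨Nat.nth P t, (Nat.nth_lt_nth hP).2 (Nat.lt_succ_self t), ?_⟩
      rw [hb]; exact Nat.nth_mem_of_infinite hP t
    set q := Nat.count (NotFirst g) b with hqdef
    have hq : Nat.nth (NotFirst g) q = b := Nat.nth_count hNFb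
    have gq : g q = k := by
      have := g_nth_nf hg q
      rw [hq, hb] at this; exact this.symm
    have hqb : q < b := by
      have := nth_nf_pos hg q; rwa [hq] at this
    set s := Nat.count P q with hsdef
    have hs : Nat.nth P s = q := Nat.nth_count gq
    have hst : s < t + 1 := by
      rw [← Nat.nth_lt_nth hP (k := s) (n := t + 1), hs]; exact hqb
    have hset : s = t := by
      by_contra hne
      have hslt : s < t := by omega
      have h1 : Nat.nth (NotFirst g) (Nat.nth P s) = Nat.nth P (s + 1) := IH s hslt
      rw [hs, hq] at h1
      have := Nat.nth_injective hP h1.symm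
      omega
    rw [← hset, hs, hq]

/-- If `a < b` are occurrences of the same value, the next-occurrence map at `a`
does not pass `b`. -/
lemma nth_nf_le (hg : Fractal g) {a b : ℕ} (hab : a < b) (heq : g a = g b) :
    Nat.nth (NotFirst g) a ≤ b := by
  classical
  set k := g b with hk
  have hP : (setOf (fun n => g n = k)).Infinite := hg.1 k
  have ha : g a = k := heq
  have hb : g b = k := rfl
  have hsa : Nat.nth (fun n => g n = k) (Nat.count (fun n => g n = k) a) = a :=
    Nat.nth_count ha
  have hsb : Nat.nth (fun n => g n = k) (Nat.count (fun n => g n = k) b) = b :=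
    Nat.nth_count hb
  have hcount : Nat.count (fun n => g n = k) a < Nat.count (fun n => g n = k) b := by
    have h1 : Nat.count (fun n => g n = k) (a + 1) = Nat.count (fun n => g n = k) a + 1 := by
      rw [Nat.count_succ, if_pos ha]
    have h2 : Nat.count (fun n => g n = k) (a + 1) ≤ Nat.count (fun n => g n = k) b :=
      Nat.count_monotone _ hab
    omega
  calc Nat.nth (NotFirst g) a
      = Nat.nth (NotFirst g) (Nat.nth (fun n => g n = k) (Nat.count (fun n => g n = k) a)) := by
        rw [hsa]
    _ = Nat.nth (fun n => g n = k) (Nat.count (fun n => g n = k) a + 1) := nth_nf_occ hg k _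
    _ ≤ Nat.nth (fun n => g n = k) (Nat.count (fun n => g n = k) b) :=
        (Nat.nth_le_nth hP).2 hcount
    _ = b := hsb

lemma card_first (hg : Fractal g) (n : ℕ) [DecidablePred (NotFirst g)] :
    ((Finset.range (n + 1)).filter (fun m => ¬ NotFirst g m)).card
      = (Finset.range (n + 1)).sup g + 1 := by
  classical
  set F := (Finset.range (n + 1)).sup g with hF
  have hmono : StrictMono (firstOcc g) := fun j k hjk => hg.2.1 j k hjk
  obtain ⟨m0, hm0mem, hm0⟩ := Finset.exists_mem_eq_sup (Finset.range (n + 1))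
    ⟨0, Finset.mem_range.2 (Nat.succ_pos n)⟩ g
  have hm0n : m0 ≤ n := Nat.lt_succ_iff.1 (Finset.mem_range.1 hm0mem)
  have himg : (Finset.range (n + 1)).filter (fun m => ¬ NotFirst g m)
      = (Finset.range (F + 1)).image (firstOcc g) := by
    ext m
    simp only [Finset.mem_filter, Finset.mem_range, Finset.mem_image, Nat.lt_succ_iff]
    constructor
    · rintro ⟨hmn, hnf⟩
      refine ⟨g m, Finset.le_sup (Finset.mem_range.2 (Nat.lt_succ_iff.2 hmn)), ?_⟩
      have h1 : firstOcc g (g m) ≤ m := firstOcc_le m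
      rcases lt_or_eq_of_le h1 with h | h
      · exact absurd ⟨firstOcc g (g m), h, g_firstOcc hg.1 (g m)⟩ hnf
      · exact h
    · rintro ⟨v, hv, rfl⟩
      refine ⟨?_, not_notFirst_firstOcc hg.1 v⟩
      have h1 : firstOcc g v ≤ firstOcc g F := hmono.monotone hv
      have h2 : firstOcc g F ≤ m0 := by
        have := firstOcc_le (g := g) m0
        rwa [← hm0] at this
      omega
  rw [himg, Finset.card_image_of_injective _ hmono.injective, Finset.card_range]

lemma count_nf (hg : Fractal g) (n : ℕ) [DecidablePred (NotFirst g)] :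
    Nat.count (NotFirst g) (n + 1) = n - (Finset.range (n + 1)).sup g := by
  classical
  have hsplit := Finset.card_filter_add_card_filter_not
    (s := Finset.range (n + 1)) (p := fun m => NotFirst g m)
  have hcard := card_first hg n
  have hle : ((Finset.range (n + 1)).filter (fun m => ¬ NotFirst g m)).card ≤ n + 1 := by
    calc _ ≤ (Finset.range (n + 1)).card := Finset.card_filter_le _ _
    _ = n + 1 := Finset.card_range _
  rw [Nat.count_eq_card_filter_range]
  simp only [Finset.card_range] at hsplit
  omega

lemma sup_le_self (hg : Fractal g) (n : ℕ) : (Finset.range (n + 1)).sup g ≤ n := by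
  classical
  have h := card_first hg n
  have hle : ((Finset.range (n + 1)).filter (fun m => ¬ NotFirst g m)).card ≤ n + 1 := by
    calc _ ≤ (Finset.range (n + 1)).card := Finset.card_filter_le _ _
    _ = n + 1 := Finset.card_range _
  omega

end FractalAux

open FractalAux in
/-- every fractal sequence is the Maximum Nim Grundy sequence for the
regular rule `f n = max { g m : m ≤ n }`. -/
theorem fractal_is_maxNim_grundy (g : ℕ → ℕ) (hg : Fractal g) (f : ℕ → ℕ)
    (hf : ∀ n, f n = (Finset.range (n + 1)).sup g) :
    Regular f ∧ MaxNimGrundy f g := by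
  classical
  have hle_f : ∀ m n, m ≤ n → g m ≤ f n := fun m n hmn => by
    rw [hf]; exact Finset.le_sup (Finset.mem_range.2 (Nat.lt_succ_iff.2 hmn))
  have hfn_le : ∀ n, f n ≤ n := fun n => by rw [hf]; exact sup_le_self hg n
  have hg0 : g 0 = 0 := by
    by_contra hne
    have h0 : 0 < g 0 := Nat.pos_of_ne_zero hne
    have h1 : firstOcc g 0 < firstOcc g (g 0) := hg.2.1 0 (g 0) h0
    have h2 : firstOcc g (g 0) ≤ 0 := firstOcc_le 0
    omega
  have hmono : ∀ {m n : ℕ}, m ≤ n → f m ≤ f n := fun {m n} hmn => by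
    rw [hf, hf]
    exact Finset.sup_mono (Finset.range_subset_range.2 (by omega))
  have hstep : ∀ n, f (n + 1) ≤ f n + 1 := by
    intro n
    have hgn1 : g (n + 1) ≤ f n + 1 := by
      by_contra hcon
      push_neg at hcon
      have h1 : f n + 1 < g (n + 1) := by omega
      have h2 : firstOcc g (f n + 1) < firstOcc g (g (n + 1)) := hg.2.1 _ _ h1
      have h3 : firstOcc g (g (n + 1)) ≤ n + 1 := firstOcc_le (n + 1)
      have h4 : firstOcc g (f n + 1) ≤ n := by omega
      have h5 : g (firstOcc g (f n + 1)) ≤ f n := hle_f _ n h4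
      rw [g_firstOcc hg.1] at h5
      omega
    rw [hf (n + 1), Finset.range_add_one, Finset.sup_insert, ← hf n]
    exact sup_le hgn1 (Nat.le_succ _)
  have hreg : Regular f := by
    refine ⟨?_, hfn_le, fun n => ⟨hmono (by omega), hstep n⟩⟩
    rw [hf, Finset.range_one, Finset.sup_singleton, hg0]
  refine ⟨hreg, fun n => ?_⟩
  set S : Set ℕ := {v | ∃ i, 1 ≤ i ∧ i ≤ f n ∧ g (n - i) = v} with hS
  have hmemS : ∀ v, v ∈ S ↔ ∃ m, n - f n ≤ m ∧ m < n ∧ g m = v := by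
    intro v
    constructor
    · rintro ⟨i, hi1, hi2, hgv⟩
      exact ⟨n - i, by omega, by have := hfn_le n; omega, hgv⟩
    · rintro ⟨m, hm1, hm2, hgv⟩
      refine ⟨n - m, by omega, by have := hfn_le n; omega, ?_⟩
      have : n - (n - m) = m := by omega
      rw [this]; exact hgv
  have hcount : Nat.count (NotFirst g) (n + 1) = n - f n := by
    rw [count_nf hg n, ← hf]
  -- g n ∉ S
  have hnotin : g n ∉ S := by
    intro hvin
    obtain ⟨m, hm1, hm2, hgv⟩ := (hmemS (g n)).1 hvin
    have h1 : Nat.nth (NotFirst g) m ≤ n := nth_nf_le hg hm2 hgv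
    have h2 : n + 1 ≤ Nat.nth (NotFirst g) m := by
      rw [← Nat.count_le_iff_le_nth (nf_infinite hg), hcount]; omega
    omega
  -- every v < g n is in S
  have hallin : ∀ v < g n, v ∈ S := by
    intro v hv
    set T := (Finset.range n).filter (fun q => g q = v) with hT
    have hTne : T.Nonempty := by
      have h1 : firstOcc g v < firstOcc g (g n) := hg.2.1 v (g n) hv
      have h2 : firstOcc g (g n) ≤ n := firstOcc_le n
      exact ⟨firstOcc g v, Finset.mem_filter.2 ⟨Finset.mem_range.2 (by omega),
        g_firstOcc hg.1 v⟩⟩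
    set q := T.max' hTne with hq
    have hqmem := T.max'_mem hTne
    rw [Finset.mem_filter, Finset.mem_range] at hqmem
    have hqc : n - f n ≤ q := by
      by_contra hcon
      push_neg at hcon
      set r := Nat.nth (NotFirst g) q with hr
      have hrn : r < n + 1 := by
        rw [hr]
        exact Nat.nth_lt_of_lt_count (by omega)
      have hgr : g r = v := by rw [hr, g_nth_nf hg]; exact hqmem.2
      have hrn' : r < n := by
        rcases Nat.lt_succ_iff_lt_or_eq.1 hrn with h | h
        · exact h
        · rw [h] at hgr; omega
      have hrq : q < r := nth_nf_pos hg q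
      have : r ≤ q := Finset.le_max' T r (Finset.mem_filter.2 ⟨Finset.mem_range.2 hrn', hgr⟩)
      omega
    exact (hmemS v).2 ⟨q, hqc, hqmem.1, hqmem.2⟩
  -- conclude mex
  show g n = mex S
  unfold mex
  have hbound : ∀ v, v ∈ {v | v ∉ S} → g n ≤ v := by
    intro v hvS
    by_contra hcon
    push_neg at hcon
    exact hvS (hallin v hcon)
  apply le_antisymm
  · exact hbound _ (Nat.sInf_mem (⟨g n, hnotin⟩ : Set.Nonempty {v | v ∉ S}))
  · exact Nat.sInf_le (show g n ∈ {v | v ∉ S} from hnotin)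
end
end

section
/- The Grundy sequence h for Minimum Nim with rule f(n) = ⌊(n-1)/2⌋ satisfies h(n) = ⌊log₂ n⌋ + 1 for all n ≥ 1, and h(0) = 0. -/
open Classical

noncomputable section

/-!
For `n ≥ 1` the positions reachable from `n` are exactly `0, …, ⌊n/2⌋`, so `h n` is the mex of
`h` on `[0, ⌊n/2⌋]`. By strong induction `h` is the binary length `Nat.size`: the sizes of
`0, …, m` are exactly `0, …, size m`, and `size ⌊n/2⌋ + 1 = size n`. Finally
`size n = ⌊log₂ n⌋ + 1` for `n ≠ 0`.
-/

theorem mex_Iio (m : ℕ) : mex (Set.Iio m) = m := by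
  show sInf (Set.Iio m)ᶜ = m
  rw [Set.compl_Iio, csInf_Ici]

namespace Nat

theorem size_eq_log_add_one {n : ℕ} (hn : n ≠ 0) : n.size = log 2 n + 1 :=
  le_antisymm (size_le.2 (lt_pow_succ_log_self one_lt_two n))
    (lt_size.2 (pow_log_le_self 2 hn))

theorem size_div_two_add_one {n : ℕ} (hn : n ≠ 0) : (n / 2).size + 1 = n.size := by
  conv_rhs => rw [← bit_testBit_zero_shiftRight_one n]
  rw [size_bit (by rwa [bit_testBit_zero_shiftRight_one]), shiftRight_one]

theorem image_size_Iic (m : ℕ) : size '' Set.Iic m = Set.Iio (m.size + 1) := by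
  ext v
  simp only [Set.mem_image, Set.mem_Iic, Set.mem_Iio, Nat.lt_succ_iff]
  constructor
  · rintro ⟨i, hi, rfl⟩
    exact size_le_size hi
  · intro hv
    rcases v with _ | v
    · exact ⟨0, zero_le m, size_zero⟩
    · exact ⟨2 ^ v, lt_size.1 hv, size_pow⟩

end Nat

theorem MinNimGrundy.eq_size {f h : ℕ → ℕ} (hf : ∀ n, f n = (n - 1) / 2)
    (hh : MinNimGrundy f h) (n : ℕ) : h n = n.size := by
  induction n using Nat.strong_induction_on with
  | _ n ih =>
  rw [hh n]
  rcases Nat.eq_zero_or_pos n with rfl | hn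
  · simpa using mex_Iio 0
  · have hmoves : {i | i + f n + 1 ≤ n} = Set.Iic (n / 2) := by
      ext i; simp only [Set.mem_ofPred_eq, Set.mem_Iic, hf]; omega
    have hsize : Set.EqOn h Nat.size (Set.Iic (n / 2)) := fun i hi =>
      ih i (lt_of_le_of_lt hi (Nat.div_lt_self hn one_lt_two))
    change mex (h '' {i | i + f n + 1 ≤ n}) = n.size
    rw [hmoves, hsize.image_eq, Nat.image_size_Iic, mex_Iio, Nat.size_div_two_add_one hn.ne']

/-- the Minimum Nim Grundy sequence with rule `f n = ⌊(n-1)/2⌋` is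
`h n = ⌊log₂ n⌋ + 1` for `n ≥ 1`, and `h 0 = 0`. -/
theorem minNim_half_rule_formula (f h : ℕ → ℕ) (hf : ∀ n, f n = (n - 1) / 2)
    (hh : MinNimGrundy f h) :
    h 0 = 0 ∧ ∀ n, 1 ≤ n → h n = Nat.log 2 n + 1 :=
  ⟨hh.eq_size hf 0, fun n hn => (hh.eq_size hf n).trans (Nat.size_eq_log_add_one (by omega))⟩
end
end

section
/- Let g be an interspersion and M a finite set of natural numbers with #M = m ≥ 1. Then the restriction g|M (the subsequence of g consisting of terms lying in M) is eventually periodic with period m: there exists N such that (g|M)(n+m) = (g|M)(n) for all n ≥ N. -/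
open Classical

noncomputable section

/-!
For `i ≠ j` the restriction `g|{i, j}` eventually alternates, so eventually exactly one `j`
lies between two consecutive occurrences of `i`. Hence, far out, between an occurrence of
`i ∈ M` and the next occurrence of `i` every other element of `M` occurs exactly once: the
term of `g|M` that is `#M` places later is again `i`.
-/

open Nat

theorem Nat.count_nth_succ_of_imp {A P : ℕ → Prop} [DecidablePred P]
    (hA : {x | A x}.Infinite) (hPA : ∀ x, P x → A x) (t : ℕ) :
    count P (nth A (t + 1)) = count P (nth A t) + if P (nth A t) then 1 else 0 := by
  have hlt : nth A t < nth A (t + 1) := (nth_lt_nth hA).2 (lt_add_one t)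
  have hgap : count P (nth A (t + 1)) = count P (nth A t + 1) := by
    refine le_antisymm (not_lt.1 fun h => ?_) (count_monotone P hlt)
    obtain ⟨x, hx, hPx⟩ := exists_of_count_lt_count h
    have := le_nth_of_lt_nth_succ hx.2 (hPA x hPx)
    exact absurd hx.1 (by omega)
  rw [hgap, count_succ]

theorem Nat.count_mem_eq_sum_count {α : Type*} [DecidableEq α] (g : ℕ → α) (M : Finset α)
    (n : ℕ) : count (g · ∈ M) n = ∑ j ∈ M, count (g · = j) n := by
  simp only [count_eq_card_filter_range]
  rw [Finset.card_eq_sum_card_fiberwise (f := g) (s := {x ∈ Finset.range n | g x ∈ M})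
    (t := M) fun x hx => (Finset.mem_filter.1 (Finset.mem_coe.1 hx)).2]
  refine Finset.sum_congr rfl fun j hj => ?_
  rw [Finset.filter_filter]
  exact congrArg Finset.card
    (Finset.filter_congr fun x _ => ⟨And.right, fun h => ⟨h ▸ hj, h⟩⟩)

theorem Interspersion.restrictSeq_pair_alternates {g : ℕ → ℕ} (hg : Interspersion g)
    {i j : ℕ} (hij : i ≠ j) :
    ∃ N, ∀ t ≥ N, restrictSeq g {i, j} (t + 1) ≠ restrictSeq g {i, j} t ∧
      restrictSeq g {i, j} (t + 2) = restrictSeq g {i, j} t := by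
  wlog hlt : i < j generalizing i j
  · rw [Set.pair_comm]
    exact this hij.symm (by omega)
  obtain ⟨N, -, halt⟩ := hg.2 i j hlt
  refine ⟨N, fun t ht => ?_⟩
  obtain ⟨m, rfl | rfl⟩ : ∃ m, t = N + 2 * m ∨ t = N + 2 * m + 1 := by
    obtain ⟨m, hm | hm⟩ := Nat.even_or_odd' (t - N) <;> exact ⟨m, by omega⟩
  · rw [(halt m).1, (halt m).2, show N + 2 * m + 2 = N + 2 * (m + 1) by ring, (halt (m + 1)).1]
    exact ⟨hij, rfl⟩
  · rw [(halt m).2, show N + 2 * m + 1 + 1 = N + 2 * (m + 1) by ring, (halt (m + 1)).1,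
      show N + 2 * m + 1 + 2 = N + 2 * (m + 1) + 1 by ring, (halt (m + 1)).2]
    exact ⟨hij.symm, rfl⟩

theorem Interspersion.exists_count_nth_succ_eq_add_one {g : ℕ → ℕ} (hg : Interspersion g)
    (i j : ℕ) :
    ∃ C, ∀ k, C ≤ nth (g · = i) k →
      count (g · = j) (nth (g · = i) (k + 1)) = count (g · = j) (nth (g · = i) k) + 1 := by
  have hi : {x | g x = i}.Infinite := hg.1 i
  by_cases hij : i = j
  · subst hij
    exact ⟨0, fun k _ => by rw [count_nth_of_infinite hi, count_nth_of_infinite hi]⟩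
  obtain ⟨N, hN⟩ := hg.restrictSeq_pair_alternates hij
  set A : ℕ → Prop := fun x => g x ∈ ({i, j} : Set ℕ)
  have hA : {x | A x}.Infinite := hi.mono fun x hx => Or.inl hx
  refine ⟨nth A N, fun k hk => ?_⟩
  set a := nth (g · = i) k
  have ha : g a = i := nth_mem_of_infinite hi k
  set t := count A a
  have hta : nth A t = a := nth_count (Or.inl ha)
  obtain ⟨hsucc, hsucc2⟩ := hN t ((nth_le_nth hA).1 (hta ▸ hk))
  -- `a` is the `t`-th term of `g|{i, j}`; the next two terms are `j`, then `i` again.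
  have hst : restrictSeq g {i, j} t = i := by rw [restrictSeq, hta, ha]
  have hj1 : g (nth A (t + 1)) = j :=
    (nth_mem_of_infinite hA (t + 1)).resolve_left (hst ▸ hsucc)
  have hi2 : g (nth A (t + 2)) = i := hst ▸ hsucc2
  have hAi : ∀ x, g x = i → A x := fun x hx => Or.inl hx
  have hAj : ∀ x, g x = j → A x := fun x hx => Or.inr hx
  have hnext : nth (g · = i) (k + 1) = nth A (t + 2) := by
    have : count (g · = i) (nth A (t + 2)) = k + 1 := by
      rw [count_nth_succ_of_imp hA hAi, count_nth_succ_of_imp hA hAi, hta,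
        count_nth_of_infinite hi, if_pos ha, if_neg (by rw [hj1]; exact Ne.symm hij)]
    rw [← this, nth_count (p := (g · = i)) hi2]
  rw [hnext, count_nth_succ_of_imp hA hAj, count_nth_succ_of_imp hA hAj, hta,
    if_neg (by rw [ha]; exact hij), if_pos hj1]

theorem Interspersion.exists_count_mem_nth_succ_eq_add_card {g : ℕ → ℕ}
    (hg : Interspersion g) (M : Finset ℕ) :
    ∃ C, ∀ i ∈ M, ∀ k, C ≤ nth (g · = i) k →
      count (g · ∈ M) (nth (g · = i) (k + 1)) =
        count (g · ∈ M) (nth (g · = i) k) + M.card := by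
  choose C hC using hg.exists_count_nth_succ_eq_add_one
  refine ⟨(M ×ˢ M).sup fun q => C q.1 q.2, fun i hi k hk => ?_⟩
  have hCk : ∀ j ∈ M, C i j ≤ nth (g · = i) k := fun j hj =>
    le_trans (Finset.le_sup (f := fun q => C q.1 q.2) (b := (i, j))
      (Finset.mem_product.2 ⟨hi, hj⟩)) hk
  rw [count_mem_eq_sum_count, count_mem_eq_sum_count,
    Finset.sum_congr rfl fun j hj => hC i j k (hCk j hj), Finset.sum_add_distrib,
    Finset.card_eq_sum_ones]

theorem interspersion_restrict_periodic_general (g : ℕ → ℕ) (hg : Interspersion g)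
    (M : Finset ℕ) :
    ∃ N, ∀ n, N ≤ n → restrictSeq g ↑M (n + M.card) = restrictSeq g ↑M n := by
  rcases M.eq_empty_or_nonempty with rfl | ⟨i₀, hi₀⟩
  · exact ⟨0, fun n _ => rfl⟩
  set B : ℕ → Prop := (g · ∈ M)
  have hB : {x | B x}.Infinite :=
    (hg.1 i₀).mono fun x (hx : g x = i₀) => show g x ∈ M from hx ▸ hi₀
  obtain ⟨C, hC⟩ := hg.exists_count_mem_nth_succ_eq_add_card M
  refine ⟨C, fun n hn => ?_⟩
  set p := nth B n
  set i := g p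
  have hiM : i ∈ M := nth_mem_of_infinite hB n
  set k := count (g · = i) p
  have hk : nth (g · = i) k = p := nth_count rfl
  have hnext : g (nth (g · = i) (k + 1)) = i := nth_mem_of_infinite (hg.1 i) (k + 1)
  have hcount : count B (nth (g · = i) (k + 1)) = n + M.card := by
    rw [hC i hiM k (by rw [hk]; exact hn.trans (nth_strictMono hB).le_apply), hk,
      count_nth_of_infinite hB]
  show g (nth B (n + M.card)) = g p
  rw [← hcount, nth_count (p := B) (show g _ ∈ M by rwa [hnext]), hnext]

/-- the restriction of an interspersion to a finite nonempty set `M`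
is eventually periodic with period `#M`. -/
theorem interspersion_restrict_periodic (g : ℕ → ℕ) (hg : Interspersion g)
    (M : Finset ℕ) (hM : 1 ≤ M.card) :
    ∃ N, ∀ n, N ≤ n → restrictSeq g ↑M (n + M.card) = restrictSeq g ↑M n :=
  interspersion_restrict_periodic_general g hg M
end
end

section
/- Let g be an interspersion and M an infinite set of natural numbers with increasing enumeration m₀ < m₁ < m₂ < .... Then the relabeling of g|M, obtained by restricting g to M and replacing each occurrence of mᵢ by i, is again an interspersion. -/
open Classical

noncomputable section

/-!
Writing `e` for the increasing enumeration of `M`, the hypothesis says `e ∘ r = g|M`. Since `e` is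
injective, `e ∘ (r|{i,j}) = (g|M)|{e i, e j}`, and restricting `g|M` further to a subset of `M`
is the same as restricting `g` to it directly. So `r|{i,j}` is `g|{e i, e j}` relabelled by `e⁻¹`,
and the interspersion pattern for `e i < e j` transfers to `i < j`.
-/

open Function

lemma infinite_setOf_restrictSeq_mem {g : ℕ → ℕ} {M N : Set ℕ} (hNM : N ⊆ M)
    (hN : {n | g n ∈ N}.Infinite) : {n | restrictSeq g M n ∈ N}.Infinite :=
  hN.preimage fun _ hn => Nat.subset_range_nth (hNM hn)

lemma restrictSeq_restrictSeq {g : ℕ → ℕ} {M N : Set ℕ} (hNM : N ⊆ M)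
    (hN : {n | g n ∈ N}.Infinite) : restrictSeq (restrictSeq g M) N = restrictSeq g N := by
  have hM : {n | g n ∈ M}.Infinite := hN.mono fun _ hn => hNM hn
  funext m
  exact congrArg g <| Nat.nth_comp_of_strictMono (Nat.nth_strictMono hM)
    (fun _ hk => Nat.subset_range_nth (hNM hk)) (fun hf => absurd hf hN)

lemma restrictSeq_comp_of_injective {e : ℕ → ℕ} (he : Injective e) (r : ℕ → ℕ) (S : Set ℕ) :
    restrictSeq (e ∘ r) (e '' S) = e ∘ restrictSeq r S := by
  funext n
  simp only [restrictSeq, comp_apply, he.mem_set_image]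

/-- the relabeling of the restriction of an interspersion to an
infinite set `M` (replacing the `i`-th smallest element of `M` by `i`) is again
an interspersion. -/
theorem interspersion_restrict_relabel (g : ℕ → ℕ) (hg : Interspersion g)
    (M : Set ℕ) (hM : M.Infinite) (r : ℕ → ℕ)
    (hr : ∀ m, Nat.nth (· ∈ M) (r m) = restrictSeq g M m) :
    Interspersion r := by
  set e := Nat.nth (· ∈ M)
  have he : Injective e := Nat.nth_injective hM
  have hr' : e ∘ r = restrictSeq g M := funext hr
  have heM (k : ℕ) : e k ∈ M := Nat.nth_mem_of_infinite hM k
  refine ⟨fun k => ?_, fun i j hij => ?_⟩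
  · have hocc := infinite_setOf_restrictSeq_mem (Set.singleton_subset_iff.2 (heM k))
      (by simpa using hg.1 (e k))
    simpa [← hr', he.eq_iff] using hocc
  · obtain ⟨N, hinit, halt⟩ := hg.2 (e i) (e j) (Nat.nth_strictMono hM hij)
    have hpair : e ∘ restrictSeq r {i, j} = restrictSeq g {e i, e j} := by
      rw [← restrictSeq_comp_of_injective he, hr', Set.image_pair,
        restrictSeq_restrictSeq (Set.pair_subset (heM i) (heM j))]
      exact (hg.1 (e i)).mono fun n hn => Or.inl hn
    have hval (n k : ℕ) : restrictSeq r {i, j} n = k ↔ restrictSeq g {e i, e j} n = e k := by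
      rw [← hpair, comp_apply, he.eq_iff]
    exact ⟨N, fun n hn => (hval n i).2 (hinit n hn),
      fun n => ⟨(hval _ j).2 (halt n).1, (hval _ i).2 (halt n).2⟩⟩
end
end

section
/- Let g be an interspersion and for i < j let s(i,j) be the number of occurrences of i in g strictly preceding the first occurrence of j, where when i = 0 the occurrence g(0) = 0 is not counted. Then for all i < j < k: s(i,j) + s(j,k) - 1 ≤ s(i,k) ≤ s(i,j) + s(j,k). -/
open Classical

noncomputable section

namespace Interspersion12

/-- A strictly monotone enumeration of the solution set of `p` equals `Nat.nth p`. -/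
lemma nth_eq_enum {p : ℕ → Prop} (F : ℕ → ℕ) (hF : StrictMono F)
    (hmem : ∀ m, p (F m)) (hsurj : ∀ n, p n → ∃ m, F m = n) (m : ℕ) :
    Nat.nth p m = F m := by
  classical
  have hc : Nat.count p (F m) = m := by
    have hset : (Finset.range (F m)).filter p = (Finset.range m).image F := by
      ext x
      simp only [Finset.mem_filter, Finset.mem_range, Finset.mem_image]
      constructor
      · rintro ⟨hx, hpx⟩
        obtain ⟨s, rfl⟩ := hsurj x hpx
        exact ⟨s, hF.lt_iff_lt.mp hx, rfl⟩
      · rintro ⟨s, hs, rfl⟩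
        exact ⟨hF hs, hmem s⟩
    rw [Nat.count_eq_card_filter_range, hset,
      Finset.card_image_of_injective _ hF.injective, Finset.card_range]
  conv_lhs => rw [← hc]
  exact Nat.nth_count (hmem m)

variable {g : ℕ → ℕ}

/-- Key structural data of an interspersion for a pair `x < y`. -/
lemma pair (hg : Interspersion g) {x y : ℕ} (hxy : x < y) :
    ∃ N : ℕ,
      (∀ m, Nat.nth (fun n => g n = x) m < Nat.nth (fun n => g n = y) 0 ↔ m < N) ∧
      (∀ m, Nat.nth (fun n => g n = y) m < Nat.nth (fun n => g n = x) (N + m)) ∧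
      (∀ m, Nat.nth (fun n => g n = x) (N + m) < Nat.nth (fun n => g n = y) (m + 1)) := by
  classical
  obtain ⟨N, hblk, halt⟩ := hg.2 x y hxy
  set p : ℕ → Prop := fun n => g n ∈ ({x, y} : Set ℕ) with hp
  have hpinf : (setOf p).Infinite := by
    apply (hg.1 x).mono
    intro n hn
    simp only [Set.mem_setOf_eq] at hn ⊢
    exact Or.inl hn
  set q : ℕ → ℕ := Nat.nth p with hq
  have hqmono : StrictMono q := Nat.nth_strictMono hpinf
  have hvx : ∀ n < N, g (q n) = x := hblk
  have hvy : ∀ m, g (q (N + 2 * m)) = y := fun m => (halt m).1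
  have hvx2 : ∀ m, g (q (N + 2 * m + 1)) = x := fun m => (halt m).2
  -- enumeration of occurrences of x
  set e : ℕ → ℕ := fun m => if m < N then m else 2 * m - N + 1 with he
  have hemono : StrictMono e := by
    intro a b hab
    simp only [he]
    split_ifs <;> omega
  have heN : ∀ m, e (N + m) = N + 2 * m + 1 := by
    intro m; simp only [he]; split_ifs <;> omega
  have hex : ∀ m, Nat.nth (fun n => g n = x) m = q (e m) := by
    apply nth_eq_enum (fun m => q (e m)) (hqmono.comp hemono)
    · intro m
      by_cases hm : m < N
      · simpa only [he, if_pos hm] using hvx m hm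
      · have : e m = N + 2 * (m - N) + 1 := by simp only [he, if_neg hm]; omega
        rw [this]; exact hvx2 (m - N)
    · intro n hn
      have hpn : p n := Or.inl hn
      have hqc : q (Nat.count p n) = n := Nat.nth_count hpn
      set t := Nat.count p n with ht
      by_cases htN : t < N
      · exact ⟨t, by rw [he]; simpa [htN] using hqc⟩
      · rcases Nat.even_or_odd (t - N) with ⟨m, hm⟩ | ⟨m, hm⟩
        · exfalso
          have : g (q (N + 2 * m)) = y := hvy m
          rw [show N + 2 * m = t by omega, hqc, hn] at this
          omega
        · refine ⟨N + m, ?_⟩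
          rw [heN, show N + 2 * m + 1 = t by omega, hqc]
  have hey : ∀ m, Nat.nth (fun n => g n = y) m = q (N + 2 * m) := by
    apply nth_eq_enum (fun m => q (N + 2 * m))
      (hqmono.comp (by intro a b hab; dsimp only; omega))
    · exact hvy
    · intro n hn
      have hpn : p n := Or.inr hn
      have hqc : q (Nat.count p n) = n := Nat.nth_count hpn
      set t := Nat.count p n with ht
      by_cases htN : t < N
      · exfalso
        have := hvx t htN
        rw [hqc, hn] at this; omega
      · rcases Nat.even_or_odd (t - N) with ⟨m, hm⟩ | ⟨m, hm⟩
        · exact ⟨m, by rw [show N + 2 * m = t by omega, hqc]⟩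
        · exfalso
          have : g (q (N + 2 * m + 1)) = x := hvx2 m
          rw [show N + 2 * m + 1 = t by omega, hqc, hn] at this
          omega
  refine ⟨N, ?_, ?_, ?_⟩
  · intro m
    rw [hex, hey]
    rw [hqmono.lt_iff_lt]
    simp only [he]
    split_ifs <;> omega
  · intro m
    rw [hex, hey, heN]
    exact hqmono (by omega)
  · intro m
    rw [hex, hey, heN]
    exact hqmono (by omega)

/-- Value of the striangle in terms of the pair datum `N`. -/
lemma striangle_eq (hg : Interspersion g) (h0 : g 0 = 0) {x y N : ℕ} (hxy : x < y)
    (hA : ∀ m, Nat.nth (fun n => g n = x) m < Nat.nth (fun n => g n = y) 0 ↔ m < N) :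
    striangle g x y = N - (if x = 0 then 1 else 0) ∧ (x = 0 → 1 ≤ N) := by
  classical
  set ox : ℕ → ℕ := Nat.nth (fun n => g n = x) with hox
  set oy : ℕ → ℕ := Nat.nth (fun n => g n = y) with hoy
  have hxmono : StrictMono ox := Nat.nth_strictMono (hg.1 x)
  have hxmem : ∀ m, g (ox m) = x := fun m => Nat.nth_mem_of_infinite (hg.1 x) m
  have hymem : ∀ m, g (oy m) = y := fun m => Nat.nth_mem_of_infinite (hg.1 y) m
  have hfirst : firstOcc g y = oy 0 := by
    rw [hoy, Nat.nth_zero]; rfl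
  have hzero : x = 0 → ox 0 = 0 := by
    intro hx
    rw [hox, Nat.nth_zero]
    exact Nat.sInf_eq_zero.mpr (Or.inl (show g 0 = x by rw [h0, hx]))
  have hN1 : x = 0 → 1 ≤ N := by
    intro hx
    have h1 : oy 0 ≠ 0 := by
      intro h
      have := hymem 0
      rw [h, h0] at this
      omega
    have : ox 0 < oy 0 := by
      rw [hzero hx]
      omega
    exact (hA 0).mp this
  refine ⟨?_, hN1⟩
  have hset : {n | g n = x ∧ n < firstOcc g y ∧ (x = 0 → n ≠ 0)} =
      ↑(((Finset.range N).filter (fun m => x = 0 → m ≠ 0)).image ox) := by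
    ext n
    simp only [Set.mem_setOf_eq, Finset.coe_image, Set.mem_image, Finset.mem_coe,
      Finset.mem_filter, Finset.mem_range]
    constructor
    · rintro ⟨hgn, hlt, hne⟩
      have hqc : ox (Nat.count (fun n => g n = x) n) = n := Nat.nth_count hgn
      refine ⟨Nat.count (fun n => g n = x) n, ⟨?_, ?_⟩, hqc⟩
      · apply (hA _).mp
        rw [hqc, ← hfirst]
        exact hlt
      · intro hx hm0
        apply hne hx
        rw [← hqc, hm0, hzero hx]
    · rintro ⟨m, ⟨hmN, hm0⟩, rfl⟩
      refine ⟨hxmem m, ?_, ?_⟩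
      · rw [hfirst]
        exact (hA m).mpr hmN
      · intro hx
        have h1 : 0 < m := Nat.pos_of_ne_zero (hm0 hx)
        have := hxmono h1
        rw [hzero hx] at this
        omega
  rw [striangle, hset, Set.ncard_coe_finset,
    Finset.card_image_of_injective _ hxmono.injective]
  by_cases hx : x = 0
  · have : ((Finset.range N).filter (fun m => x = 0 → m ≠ 0)) =
        (Finset.range N).erase 0 := by
      rw [← Finset.filter_ne']
      apply Finset.filter_congr
      intro m _
      simp [hx]
    rw [this, if_pos hx, Finset.card_erase_of_mem (by simp [Nat.lt_of_lt_of_le Nat.zero_lt_one (hN1 hx)]), Finset.card_range]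
  · rw [if_neg hx, Finset.filter_true_of_mem (by intro m _ h; exact absurd h hx), Finset.card_range]
    omega

end Interspersion12

open Interspersion12 in
/-- the triangle of an interspersion is subadditive:
`s i j + s j k - 1 ≤ s i k ≤ s i j + s j k` for `i < j < k`. -/
theorem interspersion_striangle_subadditive (g : ℕ → ℕ) (hg : Interspersion g)
    (h0 : g 0 = 0) :
    ∀ i j k, i < j → j < k →
      striangle g i j + striangle g j k ≤ striangle g i k + 1 ∧
      striangle g i k ≤ striangle g i j + striangle g j k := by
  intro i j k hij hjk
  have hik : i < k := hij.trans hjk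
  obtain ⟨N1, hA1, hB1, hC1⟩ := pair hg hij
  obtain ⟨N2, hA2, hB2, hC2⟩ := pair hg hjk
  obtain ⟨N3, hA3, hB3, hC3⟩ := pair hg hik
  obtain ⟨hs1, hd1⟩ := striangle_eq hg h0 hij hA1
  obtain ⟨hs2, _⟩ := striangle_eq hg h0 hjk hA2
  obtain ⟨hs3, hd3⟩ := striangle_eq hg h0 hik hA3
  have hmem : ∀ x m, g (Nat.nth (fun n => g n = x) m) = x := fun x m =>
    Nat.nth_mem_of_infinite (hg.1 x) m
  have hmono : ∀ x, StrictMono (Nat.nth (fun n => g n = x)) := fun x =>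
    Nat.nth_strictMono (hg.1 x)
  -- upper bound: N3 ≤ N1 + N2
  have hup : N3 ≤ N1 + N2 := by
    have h1 : Nat.nth (fun n => g n = k) 0 < Nat.nth (fun n => g n = j) N2 := by
      have hle : Nat.nth (fun n => g n = k) 0 ≤ Nat.nth (fun n => g n = j) N2 := by
        by_contra h
        have := (hA2 N2).mp (by omega)
        omega
      have hne : Nat.nth (fun n => g n = k) 0 ≠ Nat.nth (fun n => g n = j) N2 := by
        intro h
        have h1 := hmem k 0
        have h2 := hmem j N2
        rw [h] at h1
        omega
      omega
    have h2 : Nat.nth (fun n => g n = j) N2 < Nat.nth (fun n => g n = i) (N1 + N2) :=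
      hB1 N2
    by_contra hcon
    have h3 := (hA3 (N1 + N2)).mpr (by omega)
    omega
  -- lower bound: N1 + N2 ≤ N3 + 1
  have hlow : N1 + N2 ≤ N3 + 1 := by
    rcases Nat.eq_zero_or_pos N2 with hN2 | hN2
    · -- N2 = 0
      rcases Nat.eq_zero_or_pos N1 with hN1 | hN1
      · omega
      · have h1 : Nat.nth (fun n => g n = i) (N1 - 1) < Nat.nth (fun n => g n = j) 0 :=
          (hA1 _).mpr (by omega)
        have h2 : Nat.nth (fun n => g n = j) 0 < Nat.nth (fun n => g n = k) 1 := by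
          have := hC2 0
          rw [hN2] at this
          simpa using this
        have h3 : Nat.nth (fun n => g n = k) 1 < Nat.nth (fun n => g n = i) (N3 + 1) :=
          hB3 1
        have := (hmono i).lt_iff_lt.mp (h1.trans (h2.trans h3))
        omega
    · -- N2 ≥ 1
      by_cases hsmall : N1 + N2 ≤ 1
      · omega
      have hend : Nat.nth (fun n => g n = j) (N2 - 1) < Nat.nth (fun n => g n = k) 0 :=
        (hA2 _).mpr (by omega)
      have hsta : Nat.nth (fun n => g n = i) (N1 + N2 - 2) <
          Nat.nth (fun n => g n = j) (N2 - 1) := by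
        rcases Nat.lt_or_ge N2 2 with hN2' | hN2'
        · -- N2 = 1
          have hN21 : N2 = 1 := by omega
          have : N1 + N2 - 2 = N1 - 1 := by omega
          rw [this, hN21]
          exact (hA1 _).mpr (by omega)
        · have := hC1 (N2 - 2)
          rw [show N1 + (N2 - 2) = N1 + N2 - 2 by omega,
            show N2 - 2 + 1 = N2 - 1 by omega] at this
          exact this
      have := (hA3 _).mp (hsta.trans hend)
      omega
  have hj0 : j ≠ 0 := by omega
  rw [hs1, hs2, hs3, if_neg hj0]
  by_cases hi : i = 0
  · have d1 := hd1 hi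
    have d3 := hd3 hi
    rw [if_pos hi]
    omega
  · rw [if_neg hi]
    omega
end
end

section
/- A subadditive triangle (s(i,j))_{i<j} is determined by its column sums: if s and s' are two subadditive triangles with ∑_{i=0}^{j-1} s(i,j) = ∑_{i=0}^{j-1} s'(i,j) for all j ≥ 1, then s = s'. -/
open Classical

noncomputable section

/-! Induct on the column `k`. Once all earlier columns of `s` and `s'` agree, subadditivity
confines `s a k - s b k` to `{s a b - 1, s a b}` for `a < b < k`, and likewise for `s'`, so the
integers `s m k - s' m k` (`m < k`) pairwise differ by at most one. They sum to zero by the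
column-sum hypothesis, and integers with spread at most one and sum zero all vanish. -/

theorem Finset.eq_zero_of_sum_eq_zero_of_abs_sub_le_one {ι : Type*} {t : Finset ι} {f : ι → ℤ}
    (hf : ∀ a ∈ t, ∀ b ∈ t, |f a - f b| ≤ 1) (hsum : ∑ i ∈ t, f i = 0) :
    ∀ i ∈ t, f i = 0 := by
  have nonpos : ∀ g : ι → ℤ, (∀ a ∈ t, ∀ b ∈ t, |g a - g b| ≤ 1) → ∑ i ∈ t, g i = 0 →
      ∀ i ∈ t, g i ≤ 0 := by
    intro g hg hgsum i hi
    by_contra! hpos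
    have hnonneg : ∀ a ∈ t, 0 ≤ g a := fun a ha => by
      have := (abs_le.mp (hg i hi a ha)).2
      omega
    have := (Finset.sum_eq_zero_iff_of_nonneg hnonneg).mp hgsum i hi
    omega
  intro i hi
  have hle := nonpos f hf hsum i hi
  have hge := nonpos (-f) (fun a ha b hb => by simpa only [Pi.neg_apply, neg_sub_neg] using hf b hb a ha)
    (by simp [hsum]) i hi
  simp only [Pi.neg_apply, Left.neg_nonpos_iff] at hge
  omega

theorem SubadditiveTriangle.abs_sub_sub_sub_le_one {s s' : ℕ → ℕ → ℕ}
    (hs : SubadditiveTriangle s) (hs' : SubadditiveTriangle s') {a b k : ℕ}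
    (hab : a < b) (hbk : b < k) (heq : s a b = s' a b) :
    |((s a k : ℤ) - s' a k) - ((s b k : ℤ) - s' b k)| ≤ 1 := by
  have h := hs a b k hab hbk
  have h' := hs' a b k hab hbk
  rw [abs_le]
  omega

/-- a subadditive triangle is determined by its column sums. -/
theorem subadditiveTriangle_determined_by_column_sums (s s' : ℕ → ℕ → ℕ)
    (hs : SubadditiveTriangle s) (hs' : SubadditiveTriangle s')
    (hc : ∀ j, 1 ≤ j → ∑ i ∈ Finset.range j, s i j = ∑ i ∈ Finset.range j, s' i j) :
    ∀ i j, i < j → s i j = s' i j := by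
  intro i j hij
  induction j using Nat.strong_induction_on generalizing i with
  | _ k ih =>
    have hdiff : ∀ a ∈ Finset.range k, ∀ b ∈ Finset.range k,
        |((s a k : ℤ) - s' a k) - ((s b k : ℤ) - s' b k)| ≤ 1 := by
      intro a ha b hb
      rw [Finset.mem_range] at ha hb
      rcases lt_trichotomy a b with hab | rfl | hba
      · exact hs.abs_sub_sub_sub_le_one hs' hab hb (ih b hb a hab)
      · simp
      · rw [abs_sub_comm]
        exact hs.abs_sub_sub_sub_le_one hs' hba ha (ih a ha b hba)
    have hsum : ∑ m ∈ Finset.range k, ((s m k : ℤ) - s' m k) = 0 := by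
      rw [Finset.sum_sub_distrib, sub_eq_zero]
      exact_mod_cast hc k (by omega)
    have := Finset.eq_zero_of_sum_eq_zero_of_abs_sub_le_one hdiff hsum i (Finset.mem_range.mpr hij)
    omega
end
end

section
/- The map sending a fractal sequence g to its subadditive triangle S(g), where S(g)(i,j) counts the occurrences of i in g strictly before the first occurrence of j (not counting g(0) = 0 when i = 0), is injective: two fractal sequences with the same subadditive triangle are equal. -/
open Classical

noncomputable section

/-!
Every position below the first occurrence of `j` carries a value `< j` (F2), so summing the
column `S(g)(·, j)` counts these positions: `ĝ(j) = ∑_{i<j} S(g)(i, j) + 1`. Hence `S(g)`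
determines `ĝ`, and `ĝ` determines `g`: at a first occurrence `n = ĝ(k)` the value is `k`, and
by (F3) any other `n` repeats the value at the earlier position `m`, the number of non-first
occurrences before `n`.
-/

open Finset

variable {g h : ℕ → ℕ}

lemma firstOcc_apply_le (g : ℕ → ℕ) (n : ℕ) : firstOcc g (g n) ≤ n :=
  Nat.sInf_le rfl

lemma firstOcc_apply_eq_self_iff {n : ℕ} : firstOcc g (g n) = n ↔ ¬NotFirst g n := by
  refine ⟨fun hn ⟨m, hm, hgm⟩ => ?_, fun hn => ?_⟩
  · have : firstOcc g (g n) ≤ m := Nat.sInf_le hgm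
    omega
  · refine (firstOcc_apply_le g n).antisymm (not_lt.mp fun hlt => hn ⟨_, hlt, ?_⟩)
    exact Nat.sInf_mem (s := {m | g m = g n}) ⟨n, rfl⟩

lemma not_notFirst_iff_mem_range {n : ℕ} : ¬NotFirst g n ↔ n ∈ Set.range (firstOcc g) := by
  refine ⟨fun hn => ⟨g n, firstOcc_apply_eq_self_iff.mpr hn⟩, ?_⟩
  rintro ⟨k, rfl⟩ ⟨m, hm, hgm⟩
  have hk : g (firstOcc g k) = k :=
    Nat.sInf_mem (Nat.nonempty_of_pos_sInf (m.zero_le.trans_lt hm))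
  exact (Nat.sInf_le (hgm.trans hk) : firstOcc g k ≤ m).not_gt hm

lemma notFirst_eq_of_firstOcc_eq (hF : firstOcc g = firstOcc h) : NotFirst g = NotFirst h := by
  funext n
  refine propext (not_iff_not.mp ?_)
  rw [not_notFirst_iff_mem_range, not_notFirst_iff_mem_range, hF]

lemma count_notFirst_lt {n : ℕ} (hn : NotFirst g n) : Nat.count (NotFirst g) n < n := by
  have h0 : ¬NotFirst g 0 := fun ⟨_, h, _⟩ => Nat.not_lt_zero _ h
  cases n with
  | zero => exact absurd hn h0
  | succ n =>
    rw [Nat.count_succ', if_neg h0, add_zero]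
    exact Nat.lt_succ_of_le (Nat.count_le _)

lemma apply_eq_apply_count_notFirst (hg3 : ∀ m, Lam g m = g m) {n : ℕ} (hn : NotFirst g n) :
    g n = g (Nat.count (NotFirst g) n) := by
  conv_lhs => rw [← Nat.nth_count hn]
  exact hg3 _

lemma eq_of_firstOcc_eq (hinj : Function.Injective (firstOcc g)) (hg3 : ∀ m, Lam g m = g m)
    (hh3 : ∀ m, Lam h m = h m) (hF : firstOcc g = firstOcc h) : g = h := by
  have hNF := notFirst_eq_of_firstOcc_eq hF
  funext n
  induction n using Nat.strong_induction_on with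
  | _ n ih =>
    by_cases hn : NotFirst g n
    · rw [apply_eq_apply_count_notFirst hg3 hn, apply_eq_apply_count_notFirst hh3 (hNF ▸ hn),
        ← hNF, ih _ (count_notFirst_lt hn)]
    · refine hinj ?_
      rw [firstOcc_apply_eq_self_iff.mpr hn, hF, firstOcc_apply_eq_self_iff.mpr (hNF ▸ hn)]

lemma apply_zero_eq_zero_of_strictMono (hmono : StrictMono (firstOcc g)) : g 0 = 0 := by
  by_contra hne
  have := hmono (Nat.pos_of_ne_zero hne)
  have := firstOcc_apply_le g 0
  omega

lemma firstOcc_zero_of_strictMono (hmono : StrictMono (firstOcc g)) : firstOcc g 0 = 0 :=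
  Nat.le_zero.mp (Nat.sInf_le (apply_zero_eq_zero_of_strictMono hmono))

lemma apply_lt_of_lt_firstOcc (hmono : StrictMono (firstOcc g)) {n j : ℕ}
    (hn : n < firstOcc g j) : g n < j :=
  hmono.lt_iff_lt.mp ((firstOcc_apply_le g n).trans_lt hn)

lemma striangle_eq_card_filter (h0 : g 0 = 0) (i j : ℕ) :
    striangle g i j = #{n ∈ Ico 1 (firstOcc g j) | g n = i} := by
  rw [striangle, ← Set.ncard_coe_finset]
  congr 1
  ext n
  simp only [coe_filter, mem_Ico, Set.mem_ofPred_eq]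
  rcases Nat.eq_zero_or_pos n with rfl | hn
  · simp only [h0]
    omega
  · omega

lemma sum_striangle_add_one (hmono : StrictMono (firstOcc g)) {j : ℕ} (hj : 0 < j) :
    ∑ i ∈ range j, striangle g i j + 1 = firstOcc g j := by
  have hpos : 0 < firstOcc g j := firstOcc_zero_of_strictMono hmono ▸ hmono hj
  have hval : (Ico 1 (firstOcc g j) : Set ℕ).MapsTo g (range j) := fun n hn =>
    mem_range.mpr (apply_lt_of_lt_firstOcc hmono (mem_Ico.mp hn).2)
  simp_rw [striangle_eq_card_filter (apply_zero_eq_zero_of_strictMono hmono),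
    ← card_eq_sum_card_fiberwise hval, Nat.card_Ico]
  omega

lemma Fractal.strictMono_firstOcc (hg : Fractal g) : StrictMono (firstOcc g) :=
  fun _ _ => hg.2.1 _ _

/-- the map from fractal sequences to subadditive triangles is
injective. -/
theorem fractal_to_striangle_injective (g h : ℕ → ℕ) (hg : Fractal g) (hh : Fractal h)
    (heq : ∀ i j, i < j → striangle g i j = striangle h i j) : g = h := by
  refine eq_of_firstOcc_eq hg.strictMono_firstOcc.injective hg.2.2 hh.2.2 (funext fun j => ?_)
  rcases Nat.eq_zero_or_pos j with rfl | hj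
  · rw [firstOcc_zero_of_strictMono hg.strictMono_firstOcc,
      firstOcc_zero_of_strictMono hh.strictMono_firstOcc]
  · rw [← sum_striangle_add_one hg.strictMono_firstOcc hj,
      ← sum_striangle_add_one hh.strictMono_firstOcc hj]
    exact congrArg (· + 1) (sum_congr rfl fun i hi => heq i j (mem_range.mp hi))
end
end
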